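/- arXiv:math/0506545 — 8 statements merged into one kernel-verified Lean document; each statement's English description precedes it below -/
import Mathlib

section
/- Let m ≥ 2, r ≥ 1, and s ≥ 2r(m-1)+1 be integers, and set I_1 = [1, r(m-1)+1], I_2 = [r(m-1)+2, 2r(m-1)], I_3 = [2r(m-1)+1, s]. If Δ: [1,s] → [1,r] is a coloring and there exists a monochromatic m-set Y ⊆ I_2 ∪ I_3 with y_m ∈ I_3, then there exist monochromatic m-sets X, Y' ⊆ [1,s] with X ≺ Y' and 2(x_m - x_1) ≤ y'_m - x_1 (i.e., Δ is not an L(r)-coloring). -/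
/-- `x` is a monochromatic m-set (indexed 1..m) inside `S` under coloring `Δ`. -/
def IsMonoMSet (m : ℕ) (Δ : ℕ → ℕ) (S : Finset ℕ) (x : ℕ → ℕ) : Prop :=
  (∀ i j, 1 ≤ i → i < j → j ≤ m → x i < x j) ∧
  (∀ i, 1 ≤ i → i ≤ m → x i ∈ S) ∧
  (∀ i, 1 ≤ i → i ≤ m → Δ (x i) = Δ (x 1))

/-- There exist monochromatic m-sets X ≺ Y in `S` with 2(x_m - x_1) ≤ y_m - x_1. -/
def HasGoodPair (m : ℕ) (Δ : ℕ → ℕ) (S : Finset ℕ) : Prop :=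
  ∃ x y : ℕ → ℕ, IsMonoMSet m Δ S x ∧ IsMonoMSet m Δ S y ∧
    x m < y 1 ∧ 2 * (x m - x 1) ≤ y m - x 1

/-- `g m r` : least N such that every r-coloring of [1,N] has a good pair. -/
noncomputable def g (m r : ℕ) : ℕ :=
  sInf {N | ∀ Δ : ℕ → ℕ, (∀ z ∈ Finset.Icc 1 N, Δ z ∈ Finset.Icc 1 r) →
    HasGoodPair m Δ (Finset.Icc 1 N)}

/-!
Pigeonhole on the `r(m-1)+1` points of `I₁` gives a monochromatic `m`-set `X ⊆ I₁`. Then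
`X ≺ Y`, and `2 x_m - x_1 ≤ 2(r(m-1)+1) - 1 = 2r(m-1)+1 ≤ y_m`, which is the required
inequality.
-/

namespace IsMonoMSet

variable {m : ℕ} {Δ : ℕ → ℕ} {S T : Finset ℕ} {x : ℕ → ℕ}

theorem mono (hx : IsMonoMSet m Δ S x) (hST : S ⊆ T) : IsMonoMSet m Δ T x :=
  ⟨hx.1, fun i h1 h2 => hST (hx.2.1 i h1 h2), hx.2.2⟩

theorem exists_of_subset_card_eq {F : Finset ℕ} {c : ℕ} (hFS : F ⊆ S) (hF : F.card = m)
    (hc : ∀ z ∈ F, Δ z = c) : ∃ x, IsMonoMSet m Δ S x := by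
  let e := F.orderEmbOfFin hF
  let x : ℕ → ℕ := fun i => if h : i - 1 < m then e ⟨i - 1, h⟩ else 0
  have hxF : ∀ i, 1 ≤ i → i ≤ m → x i ∈ F := fun i _ _ => by
    simp only [x, dif_pos (show i - 1 < m by omega)]
    exact F.orderEmbOfFin_mem hF _
  refine ⟨x, fun i j hi hij hj => ?_, fun i hi him => hFS (hxF i hi him), fun i hi him => ?_⟩
  · simp only [x, dif_pos (show i - 1 < m by omega), dif_pos (show j - 1 < m by omega)]
    exact e.strictMono (Fin.mk_lt_mk.mpr (by omega))
  · rw [hc _ (hxF i hi him), hc _ (hxF 1 le_rfl (by omega))]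

theorem exists_of_card_mul_lt (hΔ : ∀ z ∈ S, Δ z ∈ T) (hcard : T.card * (m - 1) < S.card) :
    ∃ x, IsMonoMSet m Δ S x := by
  obtain ⟨c, -, hc⟩ := Finset.exists_lt_card_fiber_of_mul_lt_card_of_maps_to hΔ hcard
  obtain ⟨F, hF, hFcard⟩ :=
    Finset.exists_subset_card_eq (show m ≤ (S.filter (Δ · = c)).card by omega)
  exact exists_of_subset_card_eq (hF.trans (Finset.filter_subset _ _)) hFcard
    fun z hz => (Finset.mem_filter.mp (hF hz)).2

end IsMonoMSet

theorem stmt3_general (m r s : ℕ) (hm : 2 ≤ m)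
    (hs : 2 * r * (m - 1) + 1 ≤ s) (Δ : ℕ → ℕ)
    (hΔ : ∀ z ∈ Finset.Icc 1 s, Δ z ∈ Finset.Icc 1 r)
    (Y : ℕ → ℕ)
    (hY : IsMonoMSet m Δ (Finset.Icc (r * (m - 1) + 2) s) Y)
    (hYm : Y m ∈ Finset.Icc (2 * r * (m - 1) + 1) s) :
    HasGoodPair m Δ (Finset.Icc 1 s) := by
  rw [mul_assoc] at hs hYm
  have hI₁ : Finset.Icc 1 (r * (m - 1) + 1) ⊆ Finset.Icc 1 s :=
    Finset.Icc_subset_Icc le_rfl (by omega)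
  obtain ⟨X, hX⟩ := IsMonoMSet.exists_of_card_mul_lt (m := m) (fun z hz => hΔ z (hI₁ hz))
    (by simp)
  refine ⟨X, Y, hX.mono hI₁, hY.mono (Finset.Icc_subset_Icc (by omega) le_rfl), ?_, ?_⟩ <;>
  · have hX1 := hX.2.1 1 le_rfl (by omega)
    have hXm := hX.2.1 m (by omega) le_rfl
    have hY1 := hY.2.1 1 le_rfl (by omega)
    simp only [Finset.mem_Icc] at hX1 hXm hY1 hYm
    omega

theorem stmt3 (m r s : ℕ) (hm : 2 ≤ m) (hr : 1 ≤ r)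
    (hs : 2 * r * (m - 1) + 1 ≤ s) (Δ : ℕ → ℕ)
    (hΔ : ∀ z ∈ Finset.Icc 1 s, Δ z ∈ Finset.Icc 1 r)
    (Y : ℕ → ℕ)
    (hY : IsMonoMSet m Δ (Finset.Icc (r * (m - 1) + 2) s) Y)
    (hYm : Y m ∈ Finset.Icc (2 * r * (m - 1) + 1) s) :
    HasGoodPair m Δ (Finset.Icc 1 s) :=
  stmt3_general m r s hm hs Δ hΔ Y hY hYm
end

section
/- Let m ≥ 2 and r ≥ 1 be integers, with I_1 = [1, r(m-1)+1] and I_2 = [r(m-1)+2, 2r(m-1)]. If Δ: I_2 → [1,r] is an L(r)-coloring, then there exists an L(r)-coloring Δ_e of I_1 ∪ I_2 extending Δ such that Δ_e(1) = Δ_e(r(m-1)+1) and |Δ_e^{-1}(t) ∩ [1, r(m-1)]| = m-1 for every color t ∈ [1,r]. -/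
/-
Put Q = r(m-1). The interval [Q+2, 2Q] has only Q-1 points, so some colour σ occurs there at most
m-2 times; give σ to both 1 and Q+1. On [2, Q] copy the colouring of [Q+2, 2Q] shifted down by Q,
keeping for each colour only its first m-1 occurrences, and complete [1, Q] so that every colour has
exactly m-1 points there. Then for every colour t and W ≤ Q, the interval [2, W] has at least
min(#(t-points of [Q+2, W+Q]), m-1) points of colour t.

A pair X ≺ Y that is not admissible has y_m ≤ 2Q, hence 2x_m ≤ 2Q + x_1. If X lies in [Q+2, 2Q],
so does Y, against the hypothesis on Δ. Otherwise the points of X above Q+1 have copies in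
[2, x_m - Q] ⊆ [2, x_1 - 1], and as 1 and Q+1 have the same colour, the colour class of X in [1, Q]
would need more than m-1 points.
-/

open Finset

section Fibers

variable {α β : Type*} [DecidableEq β]

theorem card_fiber_eq_of_le_of_card_eq {s : Finset α} {T : Finset β} {c : α → β} {n : ℕ}
    (hc : ∀ z ∈ s, c z ∈ T) (hle : ∀ t ∈ T, #{z ∈ s | c z = t} ≤ n) (hs : #s = #T * n) :
    ∀ t ∈ T, #{z ∈ s | c z = t} = n := by
  have hsum : ∑ t ∈ T, #{z ∈ s | c z = t} = ∑ _t ∈ T, n := by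
    rw [← card_eq_sum_card_fiberwise hc, hs, sum_const, smul_eq_mul]
  exact (sum_eq_sum_iff_of_le hle).1 hsum

theorem card_fiber_le_of_forall_mem {s : Finset α} {T : Finset β} {c : α → β} {n : ℕ}
    (hc : ∀ z ∈ s, c z ∈ T) (hle : ∀ t ∈ T, #{z ∈ s | c z = t} ≤ n) (t : β) :
    #{z ∈ s | c z = t} ≤ n := by
  by_cases ht : t ∈ T
  · exact hle t ht
  · rw [filter_false_of_mem fun z hz (hzt : c z = t) => ht (hzt ▸ hc z hz), card_empty]
    exact n.zero_le

theorem exists_extension_card_fiber_eq [DecidableEq α] {T : Finset β} {n : ℕ} {S : Finset α}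
    (hS : #S = #T * n) (K : Finset α) (c : α → β) (hKS : K ⊆ S) (hc : ∀ z ∈ K, c z ∈ T)
    (hle : ∀ t ∈ T, #{z ∈ K | c z = t} ≤ n) :
    ∃ c' : α → β, (∀ z ∈ K, c' z = c z) ∧ (∀ z ∈ S, c' z ∈ T) ∧
      ∀ t ∈ T, #{z ∈ S | c' z = t} = n := by
  induction hk : #(S \ K) generalizing K c with
  | zero =>
    obtain rfl : K = S := hKS.antisymm (sdiff_eq_empty_iff_subset.1 (card_eq_zero.1 hk))
    exact ⟨c, fun _ _ => rfl, hc, card_fiber_eq_of_le_of_card_eq hc hle hS⟩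
  | succ k ih =>
    obtain ⟨z, hz⟩ : (S \ K).Nonempty := card_pos.1 (by omega)
    rw [mem_sdiff] at hz
    have hKS' : #K < #T * n := hS ▸ card_lt_card
      (Finset.ssubset_iff_subset_ne.2 ⟨hKS, by rintro rfl; exact hz.2 hz.1⟩)
    obtain ⟨t, ht, hlt⟩ := exists_card_fiber_lt_of_card_lt_mul (f := c) hKS'
    have hupd : ∀ w ∈ K, Function.update c z t w = c w := fun w hw =>
      Function.update_of_ne (ne_of_mem_of_not_mem hw hz.2) _ _
    have hc₁ : ∀ w ∈ insert z K, Function.update c z t w ∈ T := by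
      intro w hw
      rcases mem_insert.1 hw with rfl | hw
      · rwa [Function.update_self]
      · rw [hupd w hw]; exact hc w hw
    have hle₁ : ∀ t' ∈ T, #{w ∈ insert z K | Function.update c z t w = t'} ≤ n := by
      intro t' ht'
      rw [filter_insert, Function.update_self, filter_congr fun w hw => by rw [hupd w hw]]
      split_ifs with htt
      · rw [card_insert_of_notMem fun h => hz.2 (mem_filter.1 h).1]
        subst htt; omega
      · exact hle t' ht'
    have hk₁ : #(S \ insert z K) = k := by
      rw [sdiff_insert, card_erase_of_mem (mem_sdiff.2 hz), hk, Nat.add_sub_cancel]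
    obtain ⟨c', hc'K, hc'S, hc'T⟩ := ih _ _ (insert_subset hz.1 hKS) hc₁ hle₁ hk₁
    exact ⟨c', fun w hw => (hc'K w (mem_insert_of_mem hw)).trans (hupd w hw), hc'S, hc'T⟩

theorem card_filter_Icc_add_right (c : ℕ → β) (t : β) (a b d : ℕ) :
    #{w ∈ Icc (a + d) (b + d) | c w = t} = #{z ∈ Icc a b | c (z + d) = t} := by
  rw [← map_add_right_Icc, filter_map, card_map]
  rfl

theorem card_filter_Icc_add_card_filter_Icc (c : ℕ → β) (t : β) {a b e : ℕ} (hab : a ≤ b + 1)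
    (hbe : b ≤ e) :
    #{z ∈ Icc a b | c z = t} + #{z ∈ Icc (b + 1) e | c z = t} = #{z ∈ Icc a e | c z = t} := by
  rw [← card_union_of_disjoint (disjoint_filter_filter (disjoint_left.2 fun z hz hz' => by
    simp only [mem_Icc] at hz hz'; omega)), ← filter_union]
  congr 2
  ext z
  simp only [mem_union, mem_Icc]
  omega

theorem card_filter_card_filter_Icc_le (c : ℕ → β) (t : β) (a b n : ℕ) :
    #{z ∈ Icc a b | c z = t ∧ #{w ∈ Icc a z | c w = t} ≤ n} ≤ n := by
  set F := {z ∈ Icc a b | c z = t ∧ #{w ∈ Icc a z | c w = t} ≤ n}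
  rcases F.eq_empty_or_nonempty with hF | hF
  · rw [hF, card_empty]; exact n.zero_le
  · have hmax := (mem_filter.1 (F.max'_mem hF)).2.2
    refine (card_le_card fun z hz => ?_).trans hmax
    have hz' := mem_filter.1 hz
    simp only [mem_filter, mem_Icc] at hz' ⊢
    exact ⟨⟨hz'.1.1, F.le_max' z hz⟩, hz'.2.1⟩

theorem min_card_fiber_insert_le [DecidableEq α] {c c' : α → β} {t : β} {n : ℕ} {s : Finset α}
    {z : α} (hz : z ∉ s) (hcopy : c z = t → #{w ∈ insert z s | c w = t} ≤ n → c' z = t)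
    (hs : min #{w ∈ s | c w = t} n ≤ #{w ∈ s | c' w = t}) :
    min #{w ∈ insert z s | c w = t} n ≤ #{w ∈ insert z s | c' w = t} := by
  have hnot : ∀ f : α → β, z ∉ {w ∈ s | f w = t} := fun f h => hz (mem_filter.1 h).1
  have hmono : #{w ∈ s | c' w = t} ≤ #{w ∈ insert z s | c' w = t} :=
    card_le_card (filter_subset_filter _ (subset_insert _ _))
  by_cases hct : c z = t
  · rw [filter_insert, if_pos hct, card_insert_of_notMem (hnot c)] at hcopy ⊢
    by_cases hle : #{w ∈ s | c w = t} + 1 ≤ n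
    · rw [filter_insert, if_pos (hcopy hct hle), card_insert_of_notMem (hnot c')]
      omega
    · omega
  · rw [filter_insert, if_neg hct]
    exact hs.trans hmono

theorem min_card_fiber_le_of_copy {c c' : ℕ → β} {t : β} {a n : ℕ} (b : ℕ)
    (hcopy : ∀ z ∈ Icc a b, c z = t → #{w ∈ Icc a z | c w = t} ≤ n → c' z = t) :
    min #{z ∈ Icc a b | c z = t} n ≤ #{z ∈ Icc a b | c' z = t} := by
  induction b with
  | zero =>
    rcases Nat.eq_zero_or_pos a with rfl | ha
    · have h := hcopy 0 (by simp)
      rw [Icc_self, ← insert_empty] at h ⊢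
      exact min_card_fiber_insert_le (notMem_empty 0) h (by simp)
    · simp [Icc_eq_empty_of_lt ha]
  | succ b ih =>
    rcases le_or_gt a (b + 1) with hab | hab
    · have h := hcopy (b + 1) (mem_Icc.2 ⟨hab, le_rfl⟩)
      rw [← insert_Icc_right_eq_Icc_add_one hab] at h ⊢
      exact min_card_fiber_insert_le (by simp) h
        (ih fun z hz => hcopy z (mem_Icc.2 ⟨(mem_Icc.1 hz).1, (mem_Icc.1 hz).2.trans b.le_succ⟩))
    · simp [Icc_eq_empty_of_lt hab]

end Fibers

namespace IsMonoMSet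

variable {m : ℕ} {Δ : ℕ → ℕ} {S : Finset ℕ} {x : ℕ → ℕ}

theorem apply_le_apply (hx : IsMonoMSet m Δ S x) {i j : ℕ} (hi : 1 ≤ i) (hij : i ≤ j)
    (hj : j ≤ m) : x i ≤ x j := by
  rcases hij.eq_or_lt with rfl | hij
  · exact le_rfl
  · exact (hx.1 i j hi hij hj).le

theorem injOn (hx : IsMonoMSet m Δ S x) : Set.InjOn x (Icc 1 m) := by
  intro i hi j hj hij
  simp only [coe_Icc, Set.mem_Icc] at hi hj
  by_contra hne
  rcases Nat.lt_or_gt_of_ne hne with h | h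
  · exact (hx.1 i j hi.1 h hj.2).ne hij
  · exact (hx.1 j i hj.1 h hi.2).ne hij.symm

theorem restrict_Icc {Δ' : ℕ → ℕ} {a b e : ℕ} (hx : IsMonoMSet m Δ (Icc e b) x)
    (ha : a ≤ x 1) (hΔ : ∀ z, a ≤ z → Δ z = Δ' z) : IsMonoMSet m Δ' (Icc a b) x := by
  have hle : ∀ i, 1 ≤ i → i ≤ m → a ≤ x i := fun i hi him =>
    ha.trans (hx.apply_le_apply le_rfl hi him)
  refine ⟨hx.1, fun i hi him => ?_, fun i hi him => ?_⟩
  · exact mem_Icc.2 ⟨hle i hi him, (mem_Icc.1 (hx.2.1 i hi him)).2⟩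
  · rw [← hΔ _ (hle i hi him), ← hΔ _ (hle 1 le_rfl (hi.trans him))]
    exact hx.2.2 i hi him

theorem le_card_fiber_add_min {p : ℕ} (hx : IsMonoMSet m Δ S x) (hp : x 1 ≤ p) :
    m ≤ #{z ∈ Icc (x 1) p | Δ z = Δ (x 1)} +
      min #{z ∈ Icc (p + 1) (x m) | Δ z = Δ (x 1)} (m - 1) := by
  have hcard : ∀ I ⊆ Icc 1 m, ∀ s : Finset ℕ, (∀ i ∈ I, x i ∈ s) →
      #I ≤ #{z ∈ s | Δ z = Δ (x 1)} := fun I hI s hs =>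
    card_le_card_of_injOn x (fun i hi => by
      have hi' := mem_Icc.1 (hI hi)
      exact mem_filter.2 ⟨hs i hi, hx.2.2 i hi'.1 hi'.2⟩) (hx.injOn.mono (coe_subset.2 hI))
  have hxi : ∀ i ∈ Icc 1 m, x 1 ≤ x i ∧ x i ≤ x m := fun i hi => by
    have hi' := mem_Icc.1 hi
    exact ⟨hx.apply_le_apply le_rfl hi'.1 hi'.2, hx.apply_le_apply hi'.1 hi'.2 le_rfl⟩
  set A := {i ∈ Icc 1 m | x i ≤ p}
  set B := {i ∈ Icc 1 m | ¬ x i ≤ p}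
  have hAB : #A + #B = m := by
    rw [card_filter_add_card_filter_not, Nat.card_Icc, Nat.add_sub_cancel]
  have hA : #A ≤ #{z ∈ Icc (x 1) p | Δ z = Δ (x 1)} :=
    hcard A (filter_subset _ _) _ fun i hi => by
      have hi' := mem_filter.1 hi
      exact mem_Icc.2 ⟨(hxi i hi'.1).1, hi'.2⟩
  have hB : #B ≤ #{z ∈ Icc (p + 1) (x m) | Δ z = Δ (x 1)} :=
    hcard B (filter_subset _ _) _ fun i hi => by
      have hi' := mem_filter.1 hi
      exact mem_Icc.2 ⟨by omega, (hxi i hi'.1).2⟩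
  have hBm : #B ≤ m - 1 := by
    refine (card_le_card fun i hi => ?_).trans (Nat.card_Icc 2 m).le
    have hi' := mem_filter.1 hi
    obtain rfl | hi2 : i = 1 ∨ 2 ≤ i := by have := mem_Icc.1 hi'.1; omega
    · exact absurd hp hi'.2
    · exact mem_Icc.2 ⟨hi2, (mem_Icc.1 hi'.1).2⟩
  omega

end IsMonoMSet

theorem lt_two_mul_apply_of_isMonoMSet {m Q σ : ℕ} {Δe x : ℕ → ℕ} (hm : 1 ≤ m)
    (h1 : Δe 1 = σ) (hmid : Δe (Q + 1) = σ)
    (hclass : ∀ t, #{z ∈ Icc 1 Q | Δe z = t} ≤ m - 1)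
    (hprefix : ∀ t W, W ≤ Q →
      min #{z ∈ Icc (Q + 2) (W + Q) | Δe z = t} (m - 1) ≤ #{z ∈ Icc 2 W | Δe z = t})
    (hx : IsMonoMSet m Δe (Icc 1 (2 * Q)) x) (hx1 : x 1 ≤ Q + 1) :
    2 * Q + x 1 < 2 * x m := by
  by_contra! hgap
  have hx11 : 1 ≤ x 1 := (mem_Icc.1 (hx.2.1 1 le_rfl hm)).1
  have hx1m : x 1 ≤ x m := hx.apply_le_apply le_rfl hm le_rfl
  have hxm2 : x m ≤ 2 * Q := (mem_Icc.1 (hx.2.1 m hm le_rfl)).2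
  rcases le_or_gt (x m) Q with hxm | hxm
  · have hsplit := hx.le_card_fiber_add_min (p := Q) (by omega)
    rw [Icc_eq_empty_of_lt (by omega : x m < Q + 1), filter_empty, card_empty] at hsplit
    have : #{z ∈ Icc (x 1) Q | Δe z = Δe (x 1)} ≤ #{z ∈ Icc 1 Q | Δe z = Δe (x 1)} :=
      card_le_card (filter_subset_filter _ (Icc_subset_Icc_left hx11))
    have := hclass (Δe (x 1))
    omega
  obtain ⟨W, hW⟩ : ∃ W, x m = W + Q := ⟨x m - Q, by omega⟩
  obtain ⟨k, hk⟩ : ∃ k, x 1 = k + 2 := ⟨x 1 - 2, by omega⟩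
  have hsplit := hx.le_card_fiber_add_min hx1
  generalize Δe (x 1) = t at hsplit
  rw [hW, hk, show Q + 1 + 1 = Q + 2 from rfl] at hsplit
  have hpre := hprefix t W (by omega)
  have hWk : #{z ∈ Icc 2 W | Δe z = t} ≤ #{z ∈ Icc 2 (k + 1) | Δe z = t} :=
    card_le_card (filter_subset_filter _ (Icc_subset_Icc le_rfl (by omega)))
  have hsplit₁ : #{z ∈ Icc 1 1 | Δe z = t} + #{z ∈ Icc 2 Q | Δe z = t} =
      #{z ∈ Icc 1 Q | Δe z = t} := card_filter_Icc_add_card_filter_Icc Δe t (by omega) (by omega)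
  have hsplit₂ : #{z ∈ Icc 2 (k + 1) | Δe z = t} + #{z ∈ Icc (k + 2) Q | Δe z = t} =
      #{z ∈ Icc 2 Q | Δe z = t} := card_filter_Icc_add_card_filter_Icc Δe t (by omega) (by omega)
  have hsplit₃ : #{z ∈ Icc (k + 2) Q | Δe z = t} + #{z ∈ Icc (Q + 1) (Q + 1) | Δe z = t} =
      #{z ∈ Icc (k + 2) (Q + 1) | Δe z = t} :=
    card_filter_Icc_add_card_filter_Icc Δe t (by omega) (by omega)
  have hends : #{z ∈ Icc 1 1 | Δe z = t} = #{z ∈ Icc (Q + 1) (Q + 1) | Δe z = t} := by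
    rw [Icc_self, Icc_self, filter_singleton, filter_singleton, h1, hmid]
    split_ifs <;> rfl
  -- the bound on `m` adds up the `t`-points of `[k + 2, Q + 1]` and of `[2, k + 1]`, which,
  -- since `1` and `Q + 1` share a colour, are exactly as many as those of `[1, Q]`
  have := hclass t
  omega

theorem not_hasGoodPair_of_prefix {m Q σ : ℕ} {Δ Δe : ℕ → ℕ} (hm : 1 ≤ m)
    (hL : ¬ HasGoodPair m Δ (Icc (Q + 2) (2 * Q))) (hhigh : ∀ z, Q + 2 ≤ z → Δe z = Δ z)
    (h1 : Δe 1 = σ) (hmid : Δe (Q + 1) = σ)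
    (hclass : ∀ t, #{z ∈ Icc 1 Q | Δe z = t} ≤ m - 1)
    (hprefix : ∀ t W, W ≤ Q →
      min #{z ∈ Icc (Q + 2) (W + Q) | Δe z = t} (m - 1) ≤ #{z ∈ Icc 2 W | Δe z = t}) :
    ¬ HasGoodPair m Δe (Icc 1 (2 * Q)) := by
  rintro ⟨x, y, hx, hy, hxy, hgap⟩
  have hx1m := hx.apply_le_apply le_rfl hm le_rfl
  have hy1m := hy.apply_le_apply le_rfl hm le_rfl
  have hym : y m ≤ 2 * Q := (mem_Icc.1 (hy.2.1 m hm le_rfl)).2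
  by_cases hx1 : Q + 2 ≤ x 1
  · exact hL ⟨x, y, hx.restrict_Icc hx1 hhigh, hy.restrict_Icc (by omega) hhigh, hxy, hgap⟩
  · have := lt_two_mul_apply_of_isMonoMSet hm h1 hmid hclass hprefix hx (by omega)
    omega

theorem exists_coloring_dominating_prefix_counts {β : Type*} [DecidableEq β] {T : Finset β}
    {n Q : ℕ} (hQ : Q = #T * n) {c : ℕ → β} (hc : ∀ z ∈ Icc 2 Q, c z ∈ T) {σ : β} (hσ : σ ∈ T)
    (hσn : #{z ∈ Icc 2 Q | c z = σ} < n) :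
    ∃ c' : ℕ → β, c' 1 = σ ∧ (∀ z ∈ Icc 1 Q, c' z ∈ T) ∧
      (∀ t ∈ T, #{z ∈ Icc 1 Q | c' z = t} = n) ∧
      ∀ t W, W ≤ Q → min #{z ∈ Icc 2 W | c z = t} n ≤ #{z ∈ Icc 2 W | c' z = t} := by
  classical
  set F := {z ∈ Icc 2 Q | #{w ∈ Icc 2 z | c w = c z} ≤ n}
  have h1F : 1 ∉ F := by simp [F]
  have hQ1 : 1 ≤ Q := hQ ▸ Nat.mul_pos (card_pos.2 ⟨σ, hσ⟩) (by omega)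
  have hupd : ∀ z ∈ F, Function.update c 1 σ z = c z := fun z hz =>
    Function.update_of_ne (ne_of_mem_of_not_mem hz h1F) _ _
  have hK : insert 1 F ⊆ Icc 1 Q := insert_subset (by simpa using hQ1) fun z hz => by
    have := mem_Icc.1 (mem_filter.1 hz).1
    exact mem_Icc.2 ⟨by omega, this.2⟩
  have hcK : ∀ z ∈ insert 1 F, Function.update c 1 σ z ∈ T := fun z hz => by
    rcases mem_insert.1 hz with rfl | hz
    · rwa [Function.update_self]
    · rw [hupd z hz]; exact hc z (mem_filter.1 hz).1
  have hleK : ∀ t ∈ T, #{z ∈ insert 1 F | Function.update c 1 σ z = t} ≤ n := by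
    intro t _
    rw [filter_insert, Function.update_self, filter_congr fun z hz => by rw [hupd z hz]]
    split_ifs with hσt
    · rw [card_insert_of_notMem fun h => h1F (mem_filter.1 h).1, ← hσt]
      have : #{z ∈ F | c z = σ} ≤ #{z ∈ Icc 2 Q | c z = σ} :=
        card_le_card (filter_subset_filter _ (filter_subset _ _))
      omega
    · rw [filter_filter]
      refine le_of_eq_of_le (congrArg card (filter_congr fun z _ => ?_))
        (card_filter_card_filter_Icc_le c t 2 Q n)
      constructor
      · rintro ⟨h, rfl⟩; exact ⟨rfl, h⟩
      · rintro ⟨rfl, h⟩; exact ⟨h, rfl⟩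
  obtain ⟨c', hc'K, hc'S, hc'T⟩ :=
    exists_extension_card_fiber_eq (by simpa using hQ) _ _ hK hcK hleK
  refine ⟨c', by simpa using hc'K 1 (mem_insert_self 1 F), hc'S, hc'T,
    fun t W hW => min_card_fiber_le_of_copy W fun z hz hzt hzn => ?_⟩
  have hzF : z ∈ F := mem_filter.2
    ⟨mem_Icc.2 ⟨(mem_Icc.1 hz).1, (mem_Icc.1 hz).2.trans hW⟩, by rwa [hzt]⟩
  rw [hc'K z (mem_insert_of_mem hzF), hupd z hzF, hzt]

theorem exists_extension_dominating_prefix_counts {T : Finset ℕ} {n Q : ℕ} (hQ : Q = #T * n)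
    (hQ0 : 0 < Q) {Δ : ℕ → ℕ} (hΔ : ∀ z ∈ Icc (Q + 2) (2 * Q), Δ z ∈ T) :
    ∃ (Δe : ℕ → ℕ) (σ : ℕ), (∀ z ∈ Icc 1 (2 * Q), Δe z ∈ T) ∧ (∀ z, Q + 2 ≤ z → Δe z = Δ z) ∧
      Δe 1 = σ ∧ Δe (Q + 1) = σ ∧ (∀ t ∈ T, #{z ∈ Icc 1 Q | Δe z = t} = n) ∧
      ∀ t W, W ≤ Q →
        min #{z ∈ Icc (Q + 2) (W + Q) | Δe z = t} n ≤ #{z ∈ Icc 2 W | Δe z = t} := by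
  have hc : ∀ z ∈ Icc 2 Q, Δ (z + Q) ∈ T := fun z hz =>
    hΔ _ (by simp only [mem_Icc] at hz ⊢; omega)
  obtain ⟨σ, hσ, hσn⟩ := exists_card_fiber_lt_of_card_lt_mul (s := Icc 2 Q)
    (f := fun z => Δ (z + Q)) (show #(Icc 2 Q) < #T * n by rw [← hQ, Nat.card_Icc]; omega)
  obtain ⟨c', hc'1, hc'S, hc'T, hc'W⟩ := exists_coloring_dominating_prefix_counts hQ hc hσ hσn
  let Δe : ℕ → ℕ := fun z => if z ≤ Q then c' z else if z = Q + 1 then σ else Δ z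
  have hhigh : ∀ z, Q + 2 ≤ z → Δe z = Δ z := fun z hz => by
    simp only [Δe, if_neg (show ¬ z ≤ Q by omega), if_neg (show z ≠ Q + 1 by omega)]
  have hlow : ∀ z ≤ Q, Δe z = c' z := fun z hz => if_pos hz
  refine ⟨Δe, σ, fun z hz => ?_, hhigh, (hlow 1 hQ0).trans hc'1, by simp [Δe], fun t ht => ?_,
    fun t W hW => ?_⟩
  · simp only [mem_Icc] at hz
    rcases le_or_gt z Q with h | h
    · rw [hlow z h]; exact hc'S z (mem_Icc.2 ⟨hz.1, h⟩)
    rcases (show z = Q + 1 ∨ Q + 2 ≤ z by omega) with rfl | h'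
    · simpa [Δe] using hσ
    · rw [hhigh z h']; exact hΔ z (mem_Icc.2 ⟨h', hz.2⟩)
  · rw [← hc'T t ht, filter_congr fun z hz => by rw [hlow z (mem_Icc.1 hz).2]]
  · have hupper : #{z ∈ Icc (Q + 2) (W + Q) | Δe z = t} = #{z ∈ Icc 2 W | Δ (z + Q) = t} := by
      rw [add_comm Q 2, card_filter_Icc_add_right]
      exact congrArg card (filter_congr fun z hz => by
        rw [hhigh (z + Q) (by simp only [mem_Icc] at hz; omega)])
    have hlower : #{z ∈ Icc 2 W | Δe z = t} = #{z ∈ Icc 2 W | c' z = t} :=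
      congrArg card (filter_congr fun z hz => by rw [hlow z ((mem_Icc.1 hz).2.trans hW)])
    rw [hupper, hlower]
    exact hc'W t W hW

theorem stmt4 (m r : ℕ) (hm : 2 ≤ m) (hr : 1 ≤ r) (Δ : ℕ → ℕ)
    (hΔ : ∀ z ∈ Finset.Icc (r * (m - 1) + 2) (2 * r * (m - 1)),
      Δ z ∈ Finset.Icc 1 r)
    (hL : ¬ HasGoodPair m Δ (Finset.Icc (r * (m - 1) + 2) (2 * r * (m - 1)))) :
    ∃ Δe : ℕ → ℕ,
      (∀ z ∈ Finset.Icc 1 (2 * r * (m - 1)), Δe z ∈ Finset.Icc 1 r) ∧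
      (∀ z ∈ Finset.Icc (r * (m - 1) + 2) (2 * r * (m - 1)), Δe z = Δ z) ∧
      ¬ HasGoodPair m Δe (Finset.Icc 1 (2 * r * (m - 1))) ∧
      Δe 1 = Δe (r * (m - 1) + 1) ∧
      (∀ t ∈ Finset.Icc 1 r,
        ((Finset.Icc 1 (r * (m - 1))).filter (fun z => Δe z = t)).card = m - 1) := by
  rw [mul_assoc] at hΔ hL ⊢
  obtain ⟨Δe, σ, hrange, hhigh, h1, hmid, hcount, hprefix⟩ :=
    exists_extension_dominating_prefix_counts (T := Icc 1 r) (n := m - 1) (by simp)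
      (Nat.mul_pos hr (by omega)) hΔ
  have hclass := card_fiber_le_of_forall_mem
    (fun z hz => hrange z (Icc_subset_Icc_right (by omega) hz)) fun t ht => (hcount t ht).le
  exact ⟨Δe, hrange, fun z hz => hhigh z (mem_Icc.1 hz).1,
    not_hasGoodPair_of_prefix (by omega) hL hhigh h1 hmid hclass hprefix, h1.trans hmid.symm,
    hcount⟩
end

section
/- For every integer m ≥ 2, the coloring of the interval [2m, 5m-5] that assigns color 1 to the first 2m-3 integers and color 2 to the last m-1 integers is an L(2)-coloring, i.e., there do not exist monochromatic m-sets X ≺ Y within [2m, 5m-5] with 2(x_m - x_1) ≤ y_m - x_1. -/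
theorem stmt5 (m : ℕ) (hm : 2 ≤ m) :
    ¬ HasGoodPair m (fun z => if z ≤ 4 * m - 4 then 1 else 2)
      (Finset.Icc (2 * m) (5 * m - 5)) := by
  rintro ⟨x, y, ⟨hxmono, hxmem, hxcol⟩, ⟨hymono, hymem, hycol⟩, hlt, -⟩
  -- chain lemma for y
  have chainy : ∀ j, 1 ≤ j → j ≤ m → y 1 + j ≤ y j + 1 := by
    intro j
    induction j with
    | zero => omega
    | succ n ih =>
      intro _ hjm
      rcases Nat.eq_or_lt_of_le (show 1 ≤ n + 1 from Nat.succ_le_succ (Nat.zero_le n)) with h | h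
      · have hn : n = 0 := by omega
        subst hn; simp
      · have h1 : 1 ≤ n := by omega
        have := ih h1 (by omega)
        have := hymono n (n + 1) h1 (by omega) hjm
        omega
  have chainx : ∀ j, 1 ≤ j → j ≤ m → x 1 + j ≤ x j + 1 := by
    intro j
    induction j with
    | zero => omega
    | succ n ih =>
      intro _ hjm
      rcases Nat.eq_or_lt_of_le (show 1 ≤ n + 1 from Nat.succ_le_succ (Nat.zero_le n)) with h | h
      · have hn : n = 0 := by omega
        subst hn; simp
      · have h1 : 1 ≤ n := by omega
        have := ih h1 (by omega)
        have := hxmono n (n + 1) h1 (by omega) hjm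
        omega
  have hx1 := hxmem 1 le_rfl (by omega)
  simp only [Finset.mem_Icc] at hx1
  have hym := hymem m (by omega) le_rfl
  simp only [Finset.mem_Icc] at hym
  have hcy1 := chainy 1 le_rfl (by omega)
  have hcym := chainy m (by omega) le_rfl
  have hcxm := chainx m (by omega) le_rfl
  have hcol := hycol m (by omega) le_rfl
  simp only at hcol
  by_cases h1 : y 1 ≤ 4 * m - 4
  · -- y has color 1, but y m ≥ y 1 + m - 1 > x m + m - 1 ≥ x 1 + 2m - 2 ≥ 4m - 2
    have hym4 : ¬ (y m ≤ 4 * m - 4) := by omega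
    rw [if_pos h1, if_neg hym4] at hcol
    exact absurd hcol (by norm_num)
  · -- y has color 2, but then y m ≥ y 1 + m - 1 ≥ 4m - 3 + m - 1 > 5m - 5
    have hym4 : ¬ (y m ≤ 4 * m - 4) := by omega
    rw [if_neg h1, if_neg hym4] at hcol
    omega
end

section
/- For every integer m ≥ 2, g(m,2) = 5m - 4, where g(m,r) is the least N such that every r-coloring of [1,N] admits monochromatic m-sets X ≺ Y with 2(x_m - x_1) ≤ y_m - x_1. -/
/-- chain lemma -/
lemma myChain {m : ℕ} {x : ℕ → ℕ}
    (hx : ∀ i j, 1 ≤ i → i < j → j ≤ m → x i < x j) :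
    ∀ i j, 1 ≤ i → i ≤ j → j ≤ m → x i + (j - i) ≤ x j := by
  intro i j hi hij hjm
  induction j, hij using Nat.le_induction with
  | base => simp
  | succ j hij ih =>
    have h1 : x i + (j - i) ≤ x j := ih (by omega)
    have h2 : x j < x (j + 1) := hx j (j+1) (by omega) (by omega) (by omega)
    omega

/-- jump lemma -/
lemma myJump {m p q : ℕ} {x : ℕ → ℕ}
    (hx : ∀ i j, 1 ≤ i → i < j → j ≤ m → x i < x j)
    (hm : 1 ≤ m)
    (hall : ∀ i, 1 ≤ i → i ≤ m → x i ≤ p ∨ q ≤ x i)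
    (h1 : x 1 ≤ p) (hq : p < q) (hlast : q ≤ x m) :
    ∃ j, 1 ≤ j ∧ j < m ∧ x j ≤ p ∧ q ≤ x (j + 1) := by
  classical
  set S : Finset ℕ := (Finset.Icc 1 m).filter (fun i => x i ≤ p) with hS
  have hne : S.Nonempty := by
    refine ⟨1, ?_⟩
    rw [hS, Finset.mem_filter, Finset.mem_Icc]
    exact ⟨⟨le_refl 1, hm⟩, h1⟩
  set j := S.max' hne with hj
  have hjS : j ∈ S := S.max'_mem hne
  rw [hS, Finset.mem_filter, Finset.mem_Icc] at hjS
  obtain ⟨⟨hj1, hjm⟩, hjp⟩ := hjS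
  have hjlt : j < m := by
    by_contra h
    have : j = m := by omega
    rw [this] at hjp
    omega
  refine ⟨j, hj1, hjlt, hjp, ?_⟩
  rcases hall (j+1) (by omega) (by omega) with h | h
  · exfalso
    have : j + 1 ∈ S := by
      rw [hS, Finset.mem_filter, Finset.mem_Icc]
      exact ⟨⟨by omega, by omega⟩, h⟩
    have := S.le_max' _ this
    omega
  · exact h

/-- the extremal coloring -/
def myCol (m z : ℕ) : ℕ :=
  if z ≤ m - 1 ∨ (2*m - 1 ≤ z ∧ z ≤ 4*m - 4) then 1 else 2

lemma myCol_eq_one {m z : ℕ} (h : myCol m z = 1) :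
    z ≤ m - 1 ∨ (2*m - 1 ≤ z ∧ z ≤ 4*m - 4) := by
  by_contra hc
  unfold myCol at h
  rw [if_neg hc] at h
  omega

lemma myCol_eq_two {m z : ℕ} (h : myCol m z ≠ 1) :
    ¬(z ≤ m - 1 ∨ (2*m - 1 ≤ z ∧ z ≤ 4*m - 4)) := by
  by_contra hc
  unfold myCol at h
  rw [if_pos hc] at h
  omega

/-- lower bound: no good pair for the extremal coloring up to 5m-5 -/
lemma myLower (m N : ℕ) (hm : 2 ≤ m) (hN : N ≤ 5*m - 5) :
    ¬ HasGoodPair m (myCol m) (Finset.Icc 1 N) := by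
  rintro ⟨x, y, ⟨hxmono, hxmem, hxcol⟩, ⟨hymono, hymem, hycol⟩, hlt, hineq⟩
  have hx1 := Finset.mem_Icc.mp (hxmem 1 (by omega) (by omega))
  have hxm := Finset.mem_Icc.mp (hxmem m (by omega) (by omega))
  have hy1 := Finset.mem_Icc.mp (hymem 1 (by omega) (by omega))
  have hym := Finset.mem_Icc.mp (hymem m (by omega) (by omega))
  have hab : x 1 + (m - 1) ≤ x m := myChain hxmono 1 m (by omega) (by omega) (by omega)
  have hcd : y 1 + (m - 1) ≤ y m := myChain hymono 1 m (by omega) (by omega) (by omega)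
  by_cases hc : myCol m (y 1) = 1
  · -- Y has color 1
    have hYA : ∀ i, 1 ≤ i → i ≤ m →
        y i ≤ m - 1 ∨ (2*m - 1 ≤ y i ∧ y i ≤ 4*m - 4) := by
      intro i h1 h2
      exact myCol_eq_one (by rw [hycol i h1 h2]; exact hc)
    by_cases ha : myCol m (x 1) = 1
    · -- X has color 1
      have hXA : ∀ i, 1 ≤ i → i ≤ m →
          x i ≤ m - 1 ∨ (2*m - 1 ≤ x i ∧ x i ≤ 4*m - 4) := by
        intro i h1 h2
        exact myCol_eq_one (by rw [hxcol i h1 h2]; exact ha)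
      by_cases ha1 : x 1 ≤ m - 1
      · -- x 1 in first block
        have hbA := hXA m (by omega) (by omega)
        have hcA := hYA 1 (by omega) (by omega)
        have hdA := hYA m (by omega) (by omega)
        obtain ⟨j, hj1, hjm, hjp, hjq⟩ :=
          myJump (p := m - 1) (q := 2*m - 1) hxmono (by omega)
            (fun i h1 h2 => by rcases hXA i h1 h2 with h | h; exact Or.inl h; exact Or.inr h.1)
            ha1 (by omega) (by omega)
        have c1 : x 1 + (j - 1) ≤ x j := myChain hxmono 1 j (by omega) (by omega) (by omega)
        have c2 : x (j+1) + (m - (j+1)) ≤ x m :=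
          myChain hxmono (j+1) m (by omega) (by omega) (by omega)
        omega
      · -- x 1 in middle block
        have haA := hXA 1 (by omega) (by omega)
        have hcA := hYA 1 (by omega) (by omega)
        have hdA := hYA m (by omega) (by omega)
        omega
    · -- X has color 2
      have hXB : ∀ i, 1 ≤ i → i ≤ m →
          ¬(x i ≤ m - 1 ∨ (2*m - 1 ≤ x i ∧ x i ≤ 4*m - 4)) := by
        intro i h1 h2
        exact myCol_eq_two (by rw [hxcol i h1 h2]; exact ha)
      have haB := hXB 1 (by omega) (by omega)
      have hbB := hXB m (by omega) (by omega)
      have hcA := hYA 1 (by omega) (by omega)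
      omega
  · -- Y has color 2
    have hYB : ∀ i, 1 ≤ i → i ≤ m →
        ¬(y i ≤ m - 1 ∨ (2*m - 1 ≤ y i ∧ y i ≤ 4*m - 4)) := by
      intro i h1 h2
      exact myCol_eq_two (by rw [hycol i h1 h2]; exact hc)
    have hcB := hYB 1 (by omega) (by omega)
    have hdB := hYB m (by omega) (by omega)
    -- either y1 ≤ 2m-2 or y1 ≥ 4m-3
    rcases (show y 1 ≤ 2*m - 2 ∨ 4*m - 3 ≤ y 1 by omega) with h | h
    · -- then x m ≤ 2m-3, X color 2 both forced, contradiction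
      have hbcol : myCol m (x m) = myCol m (x 1) := hxcol m (by omega) (by omega)
      by_cases ha : myCol m (x 1) = 1
      · have hbA := myCol_eq_one (hbcol.trans ha)
        have haA := myCol_eq_one ha
        omega
      · have hbB := myCol_eq_two (m := m) (z := x m) (by rw [hbcol]; exact ha)
        have haB := myCol_eq_two ha
        omega
    · omega

/-- pigeonhole -/
lemma myPigeon (Δ : ℕ → ℕ) (I : Finset ℕ) (m : ℕ)
    (hI : ∀ z ∈ I, Δ z = 1 ∨ Δ z = 2) (hc : 2*m - 1 ≤ I.card) (hm : 1 ≤ m) :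
    ∃ T ⊆ I, T.card = m ∧ ∀ z ∈ T, ∀ w ∈ T, Δ z = Δ w := by
  classical
  have hsum := Finset.card_filter_add_card_filter_not
    (s := I) (p := fun z => Δ z = 1)
  rcases (show m ≤ (I.filter (fun z => Δ z = 1)).card ∨
      m ≤ (I.filter (fun z => ¬ Δ z = 1)).card by omega) with h | h
  · obtain ⟨T, hTsub, hTcard⟩ := Finset.exists_subset_card_eq h
    refine ⟨T, hTsub.trans (Finset.filter_subset _ _), hTcard, ?_⟩
    intro z hz w hw
    have hz' := (Finset.mem_filter.mp (hTsub hz)).2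
    have hw' := (Finset.mem_filter.mp (hTsub hw)).2
    rw [hz', hw']
  · obtain ⟨T, hTsub, hTcard⟩ := Finset.exists_subset_card_eq h
    refine ⟨T, hTsub.trans (Finset.filter_subset _ _), hTcard, ?_⟩
    intro z hz w hw
    have hz' := (Finset.mem_filter.mp (hTsub hz)).2
    have hw' := (Finset.mem_filter.mp (hTsub hw)).2
    have hz2 : Δ z = 2 := by
      rcases hI z (Finset.filter_subset _ _ (hTsub hz)) with h | h
      · exact absurd h hz'
      · exact h
    have hw2 : Δ w = 2 := by
      rcases hI w (Finset.filter_subset _ _ (hTsub hw)) with h | h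
      · exact absurd h hw'
      · exact h
    rw [hz2, hw2]

/-- build a mono m-set function from a finset of card m with constant color -/
lemma myBuild (m : ℕ) (hm : 1 ≤ m) (Δ : ℕ → ℕ) (S T : Finset ℕ)
    (hT : T ⊆ S) (hcard : T.card = m) (hcol : ∀ z ∈ T, ∀ w ∈ T, Δ z = Δ w) :
    ∃ x : ℕ → ℕ, IsMonoMSet m Δ S x ∧ ∀ i, 1 ≤ i → i ≤ m → x i ∈ T := by
  classical
  set x : ℕ → ℕ := fun i => if hi : i - 1 < m then (T.orderIsoOfFin hcard ⟨i - 1, hi⟩ : ℕ) else 0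
    with hx
  have hmem : ∀ i, 1 ≤ i → i ≤ m → x i ∈ T := by
    intro i h1 h2
    rw [hx]
    simp only
    rw [dif_pos (show i - 1 < m by omega)]
    exact (T.orderIsoOfFin hcard ⟨i - 1, by omega⟩).2
  have hmono : ∀ i j, 1 ≤ i → i < j → j ≤ m → x i < x j := by
    intro i j h1 h2 h3
    rw [hx]
    simp only
    rw [dif_pos (show i - 1 < m by omega), dif_pos (show j - 1 < m by omega)]
    have := (T.orderIsoOfFin hcard).strictMono
      (show (⟨i-1, by omega⟩ : Fin m) < ⟨j-1, by omega⟩ by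
        rw [Fin.mk_lt_mk]; omega)
    exact_mod_cast this
  refine ⟨x, ⟨hmono, fun i h1 h2 => hT (hmem i h1 h2), fun i h1 h2 => ?_⟩, hmem⟩
  exact hcol _ (hmem i h1 h2) _ (hmem 1 (le_refl 1) hm)

lemma myUpper (m : ℕ) (hm : 2 ≤ m) (Δ : ℕ → ℕ)
    (hΔ : ∀ z ∈ Finset.Icc 1 (5*m - 4), Δ z ∈ Finset.Icc 1 2) :
    HasGoodPair m Δ (Finset.Icc 1 (5*m - 4)) := by
  have hΔ' : ∀ z ∈ Finset.Icc 1 (5*m - 4), Δ z = 1 ∨ Δ z = 2 := by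
    intro z hz
    have := Finset.mem_Icc.mp (hΔ z hz)
    omega
  -- first interval [1, 2m-1]
  have hsub1 : Finset.Icc 1 (2*m - 1) ⊆ Finset.Icc 1 (5*m - 4) := by
    apply Finset.Icc_subset_Icc (le_refl 1) (by omega)
  have hsub2 : Finset.Icc (3*m - 2) (5*m - 4) ⊆ Finset.Icc 1 (5*m - 4) := by
    apply Finset.Icc_subset_Icc (by omega) (le_refl _)
  obtain ⟨T1, hT1sub, hT1card, hT1col⟩ :=
    myPigeon Δ (Finset.Icc 1 (2*m - 1)) m
      (fun z hz => hΔ' z (hsub1 hz))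
      (by rw [Nat.card_Icc]; omega) (by omega)
  obtain ⟨T2, hT2sub, hT2card, hT2col⟩ :=
    myPigeon Δ (Finset.Icc (3*m - 2) (5*m - 4)) m
      (fun z hz => hΔ' z (hsub2 hz))
      (by rw [Nat.card_Icc]; omega) (by omega)
  obtain ⟨x, hxM, hxT⟩ :=
    myBuild m (by omega) Δ _ T1 (hT1sub.trans hsub1) hT1card hT1col
  obtain ⟨y, hyM, hyT⟩ :=
    myBuild m (by omega) Δ _ T2 (hT2sub.trans hsub2) hT2card hT2col
  refine ⟨x, y, hxM, hyM, ?_, ?_⟩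
  · have h1 := Finset.mem_Icc.mp (hT1sub (hxT m (by omega) (by omega)))
    have h2 := Finset.mem_Icc.mp (hT2sub (hyT 1 (by omega) (by omega)))
    omega
  · have hx1 := Finset.mem_Icc.mp (hT1sub (hxT 1 (by omega) (by omega)))
    have hxm := Finset.mem_Icc.mp (hT1sub (hxT m (by omega) (by omega)))
    have hy1 := Finset.mem_Icc.mp (hT2sub (hyT 1 (by omega) (by omega)))
    have hcd : y 1 + (m - 1) ≤ y m := myChain hyM.1 1 m (by omega) (by omega) (by omega)
    omega

theorem stmt7 (m : ℕ) (hm : 2 ≤ m) : g m 2 = 5 * m - 4 := by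
  have hmem : (5*m - 4) ∈ {N | ∀ Δ : ℕ → ℕ,
      (∀ z ∈ Finset.Icc 1 N, Δ z ∈ Finset.Icc 1 2) →
      HasGoodPair m Δ (Finset.Icc 1 N)} := fun Δ hΔ => myUpper m hm Δ hΔ
  have hnot : ∀ N, N < 5*m - 4 → N ∉ {N | ∀ Δ : ℕ → ℕ,
      (∀ z ∈ Finset.Icc 1 N, Δ z ∈ Finset.Icc 1 2) →
      HasGoodPair m Δ (Finset.Icc 1 N)} := by
    intro N hN hNmem
    refine myLower m N hm (by omega) (hNmem (myCol m) ?_)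
    intro z _
    rw [Finset.mem_Icc]
    unfold myCol
    split <;> omega
  unfold g
  apply le_antisymm
  · exact Nat.sInf_le hmem
  · by_contra h
    push_neg at h
    have hsm := Nat.sInf_mem (s := {N | ∀ Δ : ℕ → ℕ,
      (∀ z ∈ Finset.Icc 1 N, Δ z ∈ Finset.Icc 1 2) →
      HasGoodPair m Δ (Finset.Icc 1 N)}) ⟨_, hmem⟩
    exact hnot _ h hsm
end

section
/- Let m ≥ 4 be an integer and Δ: [1, 3m-4] → {1,2,3} a coloring. If some color c satisfies |Δ^{-1}(c)| ≥ 3m - ⌈m/2⌉ - 2, then there exist monochromatic m-sets X ≺ Y in [1, 3m-4] with 2(x_m - x_1) ≤ y_m - x_1 (i.e., Δ is not an L(3)-coloring). -/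
/-!
Only the colour class `A = Δ⁻¹(c)` is used. As `|A| ≥ 2m`, its first `m` elements `X` and its last
`m` elements `Y` satisfy `X ≺ Y`. The `|A| - m` elements of `A` in `(x_m, y_m]` give
`y_m - x_m ≥ |A| - m`, while `y_m - x_1 ≤ 3m - 5 ≤ 2(|A| - m)` by the size of `A`. Hence
`x_m - x_1 ≤ y_m - x_m`.
-/

open Finset Nat

namespace Finset

variable (A : Finset ℕ)

lemma nth_mem {k : ℕ} (hk : k < #A) : nth (· ∈ A) k ∈ A :=
  Nat.nth_mem_of_lt_card (p := (· ∈ A)) A.finite_toSet (by simpa using hk)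

lemma nth_lt_nth {i j : ℕ} (hij : i < j) (hj : j < #A) : nth (· ∈ A) i < nth (· ∈ A) j :=
  Nat.nth_lt_nth_of_lt_card (p := (· ∈ A)) A.finite_toSet hij (by simpa using hj)

lemma nth_add_le_nth_add {i k : ℕ} (h : i + k < #A) :
    nth (· ∈ A) i + k ≤ nth (· ∈ A) (i + k) := by
  induction k with
  | zero => rfl
  | succ k ih => have := A.nth_lt_nth (Nat.lt_succ_self (i + k)) h; grind

end Finset

lemma isMonoMSet_nth_add {m k c : ℕ} {Δ : ℕ → ℕ} {S A : Finset ℕ} (hAS : A ⊆ S)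
    (hAc : ∀ z ∈ A, Δ z = c) (hk : k + m ≤ #A) :
    IsMonoMSet m Δ S (fun i => nth (· ∈ A) (k + i - 1)) := by
  refine ⟨fun i j hi hij hj => A.nth_lt_nth (by omega) (by omega),
    fun i hi him => hAS (A.nth_mem (by omega)), fun i hi him => ?_⟩
  rw [hAc _ (A.nth_mem (by omega)), hAc _ (A.nth_mem (by omega))]

lemma hasGoodPair_of_monochromatic {m N c : ℕ} {Δ : ℕ → ℕ} {A : Finset ℕ}
    (hA : A ⊆ Icc 1 N) (hAc : ∀ z ∈ A, Δ z = c) (hm : 1 ≤ m) (hmA : 2 * m ≤ #A)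
    (hNA : N + 2 * m ≤ 2 * #A + 1) :
    HasGoodPair m Δ (Icc 1 N) := by
  refine ⟨_, _, isMonoMSet_nth_add (k := 0) hA hAc (by omega),
    isMonoMSet_nth_add (k := #A - m) hA hAc (by omega), A.nth_lt_nth (by omega) (by omega), ?_⟩
  have hspanXY := A.nth_add_le_nth_add (i := m - 1) (k := #A - m) (by omega)
  rw [show m - 1 + (#A - m) = #A - 1 by omega] at hspanXY
  rw [show #A - m + m - 1 = #A - 1 by omega, zero_add, Nat.sub_self]
  have hfirst := mem_Icc.mp (hA (A.nth_mem (k := 0) (by omega)))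
  have hlast := mem_Icc.mp (hA (A.nth_mem (k := #A - 1) (by omega)))
  have hspanX := A.nth_add_le_nth_add (i := 0) (k := m - 1) (by omega)
  omega

theorem stmt8_general (m : ℕ) (hm : 4 ≤ m) (Δ : ℕ → ℕ)
    (c : ℕ)
    (hc : 3 * m - (m + 1) / 2 - 2 ≤
      ((Finset.Icc 1 (3 * m - 4)).filter (fun z => Δ z = c)).card) :
    HasGoodPair m Δ (Finset.Icc 1 (3 * m - 4)) := by
  refine hasGoodPair_of_monochromatic (c := c) (filter_subset _ _)
    (fun _ hz => (mem_filter.mp hz).2) ?_ ?_ ?_ <;> omega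

theorem stmt8 (m : ℕ) (hm : 4 ≤ m) (Δ : ℕ → ℕ)
    (hΔ : ∀ z ∈ Finset.Icc 1 (3 * m - 4), Δ z ∈ Finset.Icc 1 3)
    (c : ℕ)
    (hc : 3 * m - (m + 1) / 2 - 2 ≤
      ((Finset.Icc 1 (3 * m - 4)).filter (fun z => Δ z = c)).card) :
    HasGoodPair m Δ (Finset.Icc 1 (3 * m - 4)) :=
  stmt8_general m hm Δ c hc
end

section
/- Let m ≥ 3 be an integer and Δ: [1, 4m-5] → {1,2,3,4} a coloring. If some color c satisfies |Δ^{-1}(c)| ≥ 3m - 3, then there exist monochromatic m-sets X ≺ Y in [1, 4m-5] with 2(x_m - x_1) ≤ y_m - x_1 (i.e., Δ is not an L(4)-coloring). -/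
/-! Enumerate the class `s` of the popular colour increasingly and take for `X` its first and
for `Y` its last `m` elements. The span of `X` contains `m` elements of `s` and at most the
`N - #s` points outside `s`, while between `x_m` and `y_m` lie at least `#s - m` elements of `s`;
for `N = 4m - 5` and `#s ≥ 3m - 3` the second count dominates the first. -/

open Finset

namespace Finset

variable {s : Finset ℕ}

lemma nth_mem_of_lt_card {n : ℕ} (hn : n < #s) : Nat.nth (· ∈ s) n ∈ s :=
  Nat.nth_mem_of_lt_card s.finite_toSet (by simpa using hn)

lemma nth_lt_nth_of_lt_card {i j : ℕ} (hij : i < j) (hj : j < #s) :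
    Nat.nth (· ∈ s) i < Nat.nth (· ∈ s) j :=
  Nat.nth_lt_nth_of_lt_card s.finite_toSet hij (by simpa using hj)

lemma count_nth_of_lt_card {n : ℕ} (hn : n < #s) :
    Nat.count (· ∈ s) (Nat.nth (· ∈ s) n) = n :=
  Nat.count_nth_of_lt_card_finite s.finite_toSet (by simpa using hn)

lemma nth_add_le_nth {i d : ℕ} (hd : i + d < #s) :
    Nat.nth (· ∈ s) i + d ≤ Nat.nth (· ∈ s) (i + d) := by
  induction d with
  | zero => simp
  | succ d ih =>
    rw [← add_assoc] at hd
    show _ ≤ Nat.nth _ (i + d + 1)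
    have := nth_lt_nth_of_lt_card (Nat.lt_add_one (i + d)) hd
    have := ih (by omega)
    omega

lemma nth_sub_nth_le_of_subset_Icc {a b i j : ℕ} (hs : s ⊆ Icc a b) (hij : i ≤ j)
    (hj : j < #s) :
    Nat.nth (· ∈ s) j - Nat.nth (· ∈ s) i ≤ j - i + #(Icc a b \ s) := by
  set I := Icc (Nat.nth (· ∈ s) i) (Nat.nth (· ∈ s) j)
  have hI : I ⊆ Icc a b := by
    have hi := mem_Icc.1 (hs (nth_mem_of_lt_card (hij.trans_lt hj)))
    have hj := mem_Icc.1 (hs (nth_mem_of_lt_card hj))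
    exact Icc_subset_Icc hi.1 hj.2
  have hin : #(I ∩ s) ≤ #(Icc i j) := by
    refine card_le_card_of_injOn (Nat.count (· ∈ s)) (fun z hz => ?_) fun z hz w hw h =>
      Nat.count_injective (mem_inter.1 hz).2 (mem_inter.1 hw).2 h
    obtain ⟨hzI, -⟩ := mem_inter.1 hz
    obtain ⟨hlo, hhi⟩ := mem_Icc.1 hzI
    rw [coe_Icc, Set.mem_Icc, ← count_nth_of_lt_card (hij.trans_lt hj),
      ← count_nth_of_lt_card hj]
    exact ⟨Nat.count_monotone _ hlo, Nat.count_monotone _ hhi⟩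
  have hout : #(I \ s) ≤ #(Icc a b \ s) := card_le_card (sdiff_subset_sdiff hI subset_rfl)
  have hsplit := card_inter_add_card_sdiff I s
  simp only [I, Nat.card_Icc] at hin hout hsplit
  omega

end Finset

variable {m c : ℕ} {Δ : ℕ → ℕ} {s : Finset ℕ}

lemma isMonoMSet_nth_window {S : Finset ℕ} {o : ℕ} (hsS : s ⊆ S) (hsc : ∀ z ∈ s, Δ z = c)
    (ho : o + m ≤ #s) : IsMonoMSet m Δ S (fun i => Nat.nth (· ∈ s) (o + (i - 1))) := by
  refine ⟨fun i j hi hij hj => nth_lt_nth_of_lt_card (by omega) (by omega),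
    fun i hi hm => hsS (nth_mem_of_lt_card (by omega)), fun i hi hm => ?_⟩
  rw [hsc _ (nth_mem_of_lt_card (by omega)), hsc _ (nth_mem_of_lt_card (by omega))]

theorem hasGoodPair_of_monochromatic_s12 {N : ℕ} (hm : 0 < m) (hs : s ⊆ Icc 1 N)
    (hsc : ∀ z ∈ s, Δ z = c) (h2m : 2 * m ≤ #s) (hN : N + 2 * m ≤ 2 * #s + 1) :
    HasGoodPair m Δ (Icc 1 N) := by
  refine ⟨_, _, isMonoMSet_nth_window (o := 0) hs hsc (by omega),
    isMonoMSet_nth_window (o := #s - m) hs hsc (by omega), ?_, ?_⟩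
  · exact nth_lt_nth_of_lt_card (by omega) (by omega)
  · have hX := nth_sub_nth_le_of_subset_Icc hs (Nat.zero_le (m - 1)) (by omega)
    have hgaps : #(Icc 1 N \ s) = N - #s := by
      rw [card_sdiff_of_subset hs, Nat.card_Icc, Nat.add_sub_cancel]
    have hY := nth_add_le_nth (s := s) (i := m - 1) (d := #s - m) (by omega)
    have hXmono := nth_add_le_nth (s := s) (i := 0) (d := m - 1) (by omega)
    simp only [zero_add, Nat.sub_self, add_zero, show #s - m + (m - 1) = m - 1 + (#s - m) by omega]
      at hXmono ⊢
    omega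

theorem stmt12_general (m : ℕ) (hm : 3 ≤ m) (Δ : ℕ → ℕ)
    (c : ℕ)
    (hc : 3 * m - 3 ≤
      ((Finset.Icc 1 (4 * m - 5)).filter (fun z => Δ z = c)).card) :
    HasGoodPair m Δ (Finset.Icc 1 (4 * m - 5)) :=
  hasGoodPair_of_monochromatic_s12 (c := c) (by omega) (filter_subset _ _)
    (fun _ hz => (mem_filter.1 hz).2) (by omega) (by omega)

theorem stmt12 (m : ℕ) (hm : 3 ≤ m) (Δ : ℕ → ℕ)
    (hΔ : ∀ z ∈ Finset.Icc 1 (4 * m - 5), Δ z ∈ Finset.Icc 1 4)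
    (c : ℕ)
    (hc : 3 * m - 3 ≤
      ((Finset.Icc 1 (4 * m - 5)).filter (fun z => Δ z = c)).card) :
    HasGoodPair m Δ (Finset.Icc 1 (4 * m - 5)) :=
  stmt12_general m hm Δ c hc
end

section
/- For every integer m ≥ 3, the coloring of [4m-2, 10m-10] by four colors given by the block pattern 1^{m-3} 2^{m-1} 1^{2m-1} 3^{m-1} 4^{m-1} admits no monochromatic m-sets X ≺ Y with 2(x_m - x_1) ≤ y_m - x_1. -/
lemma myMonoGap {m : ℕ} {x : ℕ → ℕ}
    (h : ∀ i j, 1 ≤ i → i < j → j ≤ m → x i < x j) :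
    ∀ i j, 1 ≤ i → i ≤ j → j ≤ m → x i + (j - i) ≤ x j := by
  intro i j hi hij
  induction j, hij using Nat.le_induction with
  | base => intro _; simp
  | succ n hn ih =>
    intro hjm
    have h1 := h n (n + 1) (le_trans hi hn) (Nat.lt_succ_self n) hjm
    have h2 := ih (Nat.le_of_succ_le hjm)
    omega

theorem stmt13 (m : ℕ) (hm : 3 ≤ m) :
    ¬ HasGoodPair m
      (fun z =>
        if z ≤ 5 * m - 6 then 1
        else if z ≤ 6 * m - 7 then 2
        else if z ≤ 8 * m - 8 then 1
        else if z ≤ 9 * m - 9 then 3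
        else 4)
      (Finset.Icc (4 * m - 2) (10 * m - 10)) := by
  rintro ⟨x, y, ⟨hxmono, hxS, hxc⟩, ⟨hymono, hyS, hyc⟩, hlt, hineq⟩
  have gx := myMonoGap hxmono
  have gy := myMonoGap hymono
  have hx1 := hxS 1 le_rfl (by omega)
  have hxm := hxS m (by omega) le_rfl
  have hy1 := hyS 1 le_rfl (by omega)
  have hym := hyS m (by omega) le_rfl
  simp only [Finset.mem_Icc] at hx1 hxm hy1 hym
  have g1m := gx 1 m le_rfl (by omega) le_rfl
  have gy1m := gy 1 m le_rfl (by omega) le_rfl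
  have hA := hxc m (by omega) le_rfl
  have hC := hyc m (by omega) le_rfl
  simp only at hA hC
  -- y m is bounded
  have hymu : y m ≤ 8 * m - 8 := by split_ifs at hC <;> omega
  have hxm2 : 6 * m - 6 ≤ x m ∧ x m ≤ 8 * m - 8 ∧ (x 1 ≤ 5 * m - 6 ∨ 6 * m - 6 ≤ x 1) := by
    split_ifs at hA <;> omega
  obtain ⟨h6, h8, hx1c⟩ := hxm2
  rcases hx1c with hx1l5 | hx1r
  · -- x 1 in the first block
    set j := Nat.findGreatest (fun i => x i ≤ 5 * m - 6) m with hjdef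
    have hj1 : 1 ≤ j := Nat.le_findGreatest (by omega) hx1l5
    have hjm : j ≤ m := Nat.findGreatest_le m
    have hjP : x j ≤ 5 * m - 6 := Nat.findGreatest_spec (P := fun i => x i ≤ 5 * m - 6) (by omega : 1 ≤ m) hx1l5
    have hjlt : j < m := by
      rcases Nat.lt_or_ge j m with h | h
      · exact h
      · have hjm' : j = m := le_antisymm hjm h
        rw [hjm'] at hjP; omega
    have hnotP : ¬ (x (j + 1) ≤ 5 * m - 6) :=
      Nat.findGreatest_is_greatest (P := fun i => x i ≤ 5 * m - 6) (hjdef ▸ Nat.lt_succ_self j) (by omega)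
    have hB := hxc (j + 1) (by omega) (by omega)
    simp only at hB
    have hxj1 := hxS (j + 1) (by omega) (by omega)
    simp only [Finset.mem_Icc] at hxj1
    have g1j := gx 1 j le_rfl hj1 hjm
    have gjm := gx (j + 1) m (by omega) (by omega) le_rfl
    have hB6 : 6 * m - 6 ≤ x (j + 1) := by split_ifs at hB <;> omega
    omega
  · omega
end

section
/- For every integer m ≥ 3, g(m,4) = 10m - 9, where g(m,r) is the least N such that every r-coloring of [1,N] admits monochromatic m-sets X ≺ Y with 2(x_m - x_1) ≤ y_m - x_1. -/
set_option maxHeartbeats 1000000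

open Finset

/-- Build a monochromatic m-set from a finset of size m with constant color. -/
lemma exists_mono {m : ℕ} (hm : 1 ≤ m) (Δ : ℕ → ℕ) (S T : Finset ℕ) (hTS : T ⊆ S)
    (hT : T.card = m) (hcol : ∀ z ∈ T, ∀ w ∈ T, Δ z = Δ w) :
    ∃ x : ℕ → ℕ, IsMonoMSet m Δ S x ∧
      x 1 = T.min' (by rw [← Finset.card_pos, hT]; omega) ∧
      x m = T.max' (by rw [← Finset.card_pos, hT]; omega) := by
  have hmpos : 0 < m := hm
  set e := T.orderEmbOfFin hT with he
  refine ⟨fun i => e ⟨min (i - 1) (m - 1), by omega⟩, ⟨?_, ?_, ?_⟩, ?_, ?_⟩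
  · intro i j hi hij hjm
    exact e.strictMono (by simp [Fin.mk_lt_mk]; omega)
  · intro i hi him
    exact hTS (T.orderEmbOfFin_mem hT _)
  · intro i hi him
    exact hcol _ (T.orderEmbOfFin_mem hT _) _ (T.orderEmbOfFin_mem hT _)
  · show e _ = _
    rw [show (⟨min (1-1) (m-1), by omega⟩ : Fin m) = ⟨0, hmpos⟩ from by simp]
    exact T.orderEmbOfFin_zero hT hmpos
  · show e _ = _
    rw [show (⟨min (m-1) (m-1), by omega⟩ : Fin m) = ⟨m - 1, by omega⟩ from by simp]
    exact T.orderEmbOfFin_last hT hmpos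

/-- gap lemma for order embeddings from Fin K to ℕ -/
lemma emb_gap {K : ℕ} (e : Fin K ↪o ℕ) :
    ∀ (d : ℕ) (i j : Fin K), (i : ℕ) + d = (j : ℕ) → e i + d ≤ e j := by
  intro d
  induction d with
  | zero => intro i j h; have : i = j := Fin.ext (by omega); simp [this]
  | succ d ih =>
    intro i j h
    have hj : 0 < (j : ℕ) := by omega
    have hj1 : (j : ℕ) - 1 < K := by omega
    have h1 := ih i ⟨(j : ℕ) - 1, hj1⟩ (by simp; omega)
    have h2 : e ⟨(j : ℕ) - 1, hj1⟩ < e j := e.strictMono (by simp [Fin.lt_def]; omega)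
    omega


lemma final_step {m n N a1 b1 c2 K : ℕ} {Δ : ℕ → ℕ}
    (hm1 : m = n + 1) (hn2 : 2 ≤ n) (hN' : 10 * n + 1 ≤ N)
    (hb1le : b1 ≤ 4 * n + 1) (ha1pos : 1 ≤ a1) (hab1 : a1 < b1)
    (hgp : ¬ HasGoodPair m Δ (Finset.Icc 1 N))
    (key : ∀ y : ℕ → ℕ, IsMonoMSet m Δ (Finset.Icc 1 N) y → b1 < y 1 →
      y m + a1 + 1 ≤ 2 * b1)
    (hKge : 2 * n + 2 ≤ K) (hcount : N - b1 ≤ K + 3 * n)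
    (e : Fin K ↪o ℕ)
    (hFIoc : ∀ i : Fin K, b1 < e i ∧ e i ≤ N ∧ Δ (e i) = c2) : False := by
  have hemono : ∀ i j : Fin K, (i : ℕ) < (j : ℕ) → e i < e j := by
    intro i j hij
    exact e.strictMono (Fin.lt_def.mpr hij)
  set x2 : ℕ → ℕ := fun i => e ⟨min (i - 1) n, by omega⟩ with hx2
  set y2 : ℕ → ℕ := fun i => e ⟨K - 1 - n + min (i - 1) n, by omega⟩ with hy2
  have hx2mono : IsMonoMSet m Δ (Finset.Icc 1 N) x2 := by
    refine ⟨?_, ?_, ?_⟩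
    · intro i j hi hij hjm
      exact hemono _ _ (by simp; omega)
    · intro i hi him
      have h := hFIoc ⟨min (i-1) n, by omega⟩
      have h1 : b1 < x2 i := h.1
      have h2 : x2 i ≤ N := h.2.1
      simp only [mem_Icc]
      omega
    · intro i hi him
      rw [show x2 i = e ⟨min (i-1) n, by omega⟩ from rfl, (hFIoc _).2.2,
        show x2 1 = e ⟨min (1-1) n, by omega⟩ from rfl, (hFIoc _).2.2]
  have hy2mono : IsMonoMSet m Δ (Finset.Icc 1 N) y2 := by
    refine ⟨?_, ?_, ?_⟩
    · intro i j hi hij hjm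
      exact hemono _ _ (by simp; omega)
    · intro i hi him
      have h := hFIoc ⟨K - 1 - n + min (i-1) n, by omega⟩
      have h1 : b1 < y2 i := h.1
      have h2 : y2 i ≤ N := h.2.1
      simp only [mem_Icc]
      omega
    · intro i hi him
      rw [show y2 i = e ⟨K - 1 - n + min (i-1) n, by omega⟩ from rfl, (hFIoc _).2.2,
        show y2 1 = e ⟨K - 1 - n + min (1-1) n, by omega⟩ from rfl, (hFIoc _).2.2]
  have eidx : ∀ (a b : ℕ) (ha : a < K) (hb : b < K), a = b → e ⟨a, ha⟩ = e ⟨b, hb⟩ := by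
    intro a b ha hb h
    subst h
    rfl
  have hx2m : x2 m = e ⟨n, by omega⟩ := eidx _ _ _ _ (by omega)
  have hx21 : x2 1 = e ⟨0, by omega⟩ := eidx _ _ _ _ (by omega)
  have hy21 : y2 1 = e ⟨K - 1 - n, by omega⟩ := eidx _ _ _ _ (by omega)
  have hy2m : y2 m = e ⟨K - 1, by omega⟩ := eidx _ _ _ _ (by omega)
  have f1 : e ⟨K - 1, by omega⟩ + a1 + 1 ≤ 2 * b1 := by
    have hb : b1 < y2 1 := by rw [hy21]; exact (hFIoc _).1
    have := key y2 hy2mono hb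
    rw [hy2m] at this
    exact this
  have f2 : e ⟨K - 1, by omega⟩ + e ⟨0, by omega⟩ + 1 ≤ 2 * e ⟨n, by omega⟩ := by
    by_contra hcon
    have hlt : x2 m < y2 1 := by
      rw [hx2m, hy21]
      exact hemono _ _ (by simp; omega)
    have h01 : e ⟨0, by omega⟩ < e ⟨n, by omega⟩ := hemono _ _ (by simp; omega)
    have h02 : e ⟨n, by omega⟩ < e ⟨K-1, by omega⟩ := hemono _ _ (by simp; omega)
    refine hgp ⟨x2, y2, hx2mono, hy2mono, hlt, ?_⟩
    rw [hx2m, hx21, hy2m]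
    omega
  have f3 : e ⟨n, by omega⟩ + (K - 1 - n) ≤ e ⟨K - 1, by omega⟩ :=
    emb_gap e (K - 1 - n) _ _ (by simp; omega)
  have f4 : b1 < e ⟨0, by omega⟩ := (hFIoc _).1
  omega

lemma upper (m N : ℕ) (hm : 3 ≤ m) (hN : 10 * m - 9 ≤ N) (Δ : ℕ → ℕ)
    (hΔ : ∀ z ∈ Finset.Icc 1 N, Δ z ∈ Finset.Icc 1 4) :
    HasGoodPair m Δ (Finset.Icc 1 N) := by
  by_contra hgp
  set n := m - 1 with hn
  have hn2 : 2 ≤ n := by omega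
  have hm1 : m = n + 1 := by omega
  have hN' : 10 * n + 1 ≤ N := by omega
  -- Pigeonhole 1 : a color with ≥ m elements in [1, 4n+1]
  have hmaps1 : ∀ z ∈ Finset.Icc 1 (4 * n + 1), Δ z ∈ Finset.Icc 1 4 := by
    intro z hz
    exact hΔ z (by simp only [mem_Icc] at *; omega)
  obtain ⟨c1, hc1mem, hc1card⟩ :=
    Finset.exists_lt_card_fiber_of_mul_lt_card_of_maps_to hmaps1
      (by rw [Nat.card_Icc, Nat.card_Icc]; omega : (Finset.Icc 1 4).card * n < (Finset.Icc 1 (4*n+1)).card)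
  obtain ⟨T1, hT1sub, hT1card⟩ := Finset.exists_subset_card_eq
    (show m ≤ ((Finset.Icc 1 (4*n+1)).filter (fun z => Δ z = c1)).card by omega)
  have hT1Icc : T1 ⊆ Finset.Icc 1 N := by
    intro z hz
    have := Finset.mem_filter.mp (hT1sub hz)
    simp only [mem_Icc] at *
    omega
  have hT1col : ∀ z ∈ T1, ∀ w ∈ T1, Δ z = Δ w := by
    intro z hz w hw
    have h1 := (Finset.mem_filter.mp (hT1sub hz)).2
    have h2 := (Finset.mem_filter.mp (hT1sub hw)).2
    rw [h1, h2]
  obtain ⟨x1, hx1mono, hx1min, hx1max⟩ := exists_mono (by omega) Δ _ T1 hT1Icc hT1card hT1col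
  set a1 := x1 1 with ha1d
  set b1 := x1 m with hb1d
  have hT1ne : T1.Nonempty := by rw [← Finset.card_pos, hT1card]; omega
  have ha1pos : 1 ≤ a1 := by
    have := hT1Icc (T1.min'_mem hT1ne)
    rw [← hx1min] at this
    simp only [mem_Icc] at this; omega
  have hb1le : b1 ≤ 4 * n + 1 := by
    have := hT1sub (T1.max'_mem hT1ne)
    have := (Finset.mem_filter.mp this).1
    rw [← hx1max] at this
    simp only [mem_Icc] at this; omega
  have hab1 : a1 < b1 := hx1mono.1 1 m (le_refl 1) (by omega) (le_refl m)
  -- key : any mono m-set y entirely after b1 has y m + a1 + 1 ≤ 2 * b1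
  have key : ∀ y : ℕ → ℕ, IsMonoMSet m Δ (Finset.Icc 1 N) y → b1 < y 1 →
      y m + a1 + 1 ≤ 2 * b1 := by
    intro y hy hby
    by_contra hcon
    have hym : y 1 ≤ y m := le_of_lt (hy.1 1 m (le_refl 1) (by omega) (le_refl m))
    exact hgp ⟨x1, y, hx1mono, hy, hby, by omega⟩
  -- key' : a set T' of card m, constant color, inside Ioc b1 N gives max' bound
  have hIocIcc : Finset.Ioc b1 N ⊆ Finset.Icc 1 N := by
    intro z hz; simp only [mem_Ioc, mem_Icc] at *; omega
  have key' : ∀ T' : Finset ℕ, T' ⊆ Finset.Ioc b1 N → T'.card = m →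
      (∀ z ∈ T', ∀ w ∈ T', Δ z = Δ w) →
      ∀ (h : T'.Nonempty), T'.max' h + a1 + 1 ≤ 2 * b1 := by
    intro T' hsub hcard hcol h
    obtain ⟨y, hymono, hymin, hymax⟩ := exists_mono (by omega) Δ _ T'
      (fun z hz => hIocIcc (hsub hz)) hcard hcol
    have hb : b1 < y 1 := by
      rw [hymin]
      exact (Finset.mem_Ioc.mp (hsub (T'.min'_mem _))).1
    have := key y hymono hb
    rw [hymax] at this
    convert this using 3
  -- claim A : any color with ≥ m elements in Ioc b1 N has all elements ≤ 2b1 - a1 - 1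
  set F : ℕ → Finset ℕ := fun c => (Finset.Ioc b1 N).filter (fun z => Δ z = c) with hF
  have claimA : ∀ c, m ≤ (F c).card → ∀ z ∈ F c, z + a1 + 1 ≤ 2 * b1 := by
    intro c hc z hz
    have hne : (F c).Nonempty := by rw [← Finset.card_pos]; omega
    have hmaxz : z ≤ (F c).max' hne := Finset.le_max' _ _ hz
    -- subset of card m containing the max
    have hcard' : m - 1 ≤ ((F c).erase ((F c).max' hne)).card := by
      rw [Finset.card_erase_of_mem (Finset.max'_mem _ _)]; omega
    obtain ⟨T0, hT0sub, hT0card⟩ := Finset.exists_subset_card_eq hcard'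
    set T' := insert ((F c).max' hne) T0 with hT'
    have hT'sub : T' ⊆ F c := by
      intro w hw
      rcases Finset.mem_insert.mp hw with h | h
      · rw [h]; exact Finset.max'_mem _ _
      · exact Finset.erase_subset _ _ (hT0sub h)
    have hT'card : T'.card = m := by
      rw [hT', Finset.card_insert_of_notMem (fun hcon => (Finset.mem_erase.mp (hT0sub hcon)).1 rfl), hT0card]
      omega
    have hT'col : ∀ z ∈ T', ∀ w ∈ T', Δ z = Δ w := by
      intro z hz w hw
      have h1 := (Finset.mem_filter.mp (hT'sub hz)).2
      have h2 := (Finset.mem_filter.mp (hT'sub hw)).2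
      rw [h1, h2]
    have hT'ne : T'.Nonempty := ⟨_, Finset.mem_insert_self _ _⟩
    have hmax'eq : T'.max' hT'ne = (F c).max' hne := by
      apply le_antisymm
      · exact Finset.max'_le _ _ _ (fun w hw => Finset.le_max' _ _ (hT'sub hw))
      · exact Finset.le_max' _ _ (Finset.mem_insert_self _ _)
    have := key' T' (fun w hw => (Finset.mem_filter.mp (hT'sub hw)).1) hT'card hT'col hT'ne
    rw [hmax'eq] at this
    omega
  -- pigeonhole 2 : live color c2 after b1
  have hmaps2 : ∀ z ∈ Finset.Ioc b1 (b1 + (4 * n + 1)), Δ z ∈ Finset.Icc 1 4 := by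
    intro z hz
    simp only [mem_Ioc] at hz
    exact hΔ z (by simp only [mem_Icc]; omega)
  obtain ⟨c2, hc2mem, hc2card⟩ :=
    Finset.exists_lt_card_fiber_of_mul_lt_card_of_maps_to hmaps2
      (by rw [Nat.card_Icc, Nat.card_Ioc]; omega :
        (Finset.Icc 1 4).card * n < (Finset.Ioc b1 (b1 + (4*n+1))).card)
  have hc2live : m ≤ (F c2).card := by
    have hsub : (Finset.Ioc b1 (b1 + (4*n+1))).filter (fun z => Δ z = c2) ⊆ F c2 := by
      apply Finset.filter_subset_filter
      intro z hz; simp only [mem_Ioc] at *; omega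
    have := Finset.card_le_card hsub
    omega
  -- dead set
  set dead := (Finset.Icc 1 4).filter (fun c => (F c).card ≤ n) with hdead
  have hsubdead : Finset.Ioc (8 * n) N ⊆ dead.biUnion F := by
    intro z hz
    simp only [mem_Ioc] at hz
    have hzIoc : z ∈ Finset.Ioc b1 N := by simp only [mem_Ioc]; omega
    have hzF : z ∈ F (Δ z) := Finset.mem_filter.mpr ⟨hzIoc, rfl⟩
    have hΔz : Δ z ∈ Finset.Icc 1 4 := hΔ z (hIocIcc hzIoc)
    have hdeadz : (F (Δ z)).card ≤ n := by
      by_contra hcon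
      have := claimA (Δ z) (by omega) z hzF
      omega
    exact Finset.mem_biUnion.mpr ⟨Δ z, Finset.mem_filter.mpr ⟨hΔz, hdeadz⟩, hzF⟩
  have hdeadcard : 3 ≤ dead.card := by
    by_contra hcon
    have h1 : (Finset.Ioc (8*n) N).card ≤ ∑ c ∈ dead, (F c).card :=
      le_trans (Finset.card_le_card hsubdead) (Finset.card_biUnion_le)
    have h2 : ∑ c ∈ dead, (F c).card ≤ dead.card * n := by
      calc ∑ c ∈ dead, (F c).card ≤ ∑ _c ∈ dead, n :=
            Finset.sum_le_sum (fun c hc => (Finset.mem_filter.mp hc).2)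
        _ = dead.card * n := by rw [Finset.sum_const, smul_eq_mul]
    rw [Nat.card_Ioc] at h1
    have : dead.card * n ≤ 2 * n := Nat.mul_le_mul_right n (by omega)
    omega
  have hc2in : c2 ∉ dead := by
    intro hcon
    have := (Finset.mem_filter.mp hcon).2
    omega
  have hdeadsub : dead ⊆ (Finset.Icc 1 4).erase c2 := by
    intro c hc
    exact Finset.mem_erase.mpr ⟨fun h => hc2in (h ▸ hc), (Finset.mem_filter.mp hc).1⟩
  have hdeadeq : dead = (Finset.Icc 1 4).erase c2 := by
    apply Finset.eq_of_subset_of_card_le hdeadsub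
    rw [Finset.card_erase_of_mem hc2mem, Nat.card_Icc]
    omega
  -- count : N - b1 ≤ K + 3n
  set K := (F c2).card with hK
  have hcount : N - b1 ≤ K + 3 * n := by
    have hsub : Finset.Ioc b1 N ⊆ (Finset.Icc 1 4).biUnion F := by
      intro z hz
      have hzF : z ∈ F (Δ z) := Finset.mem_filter.mpr ⟨hz, rfl⟩
      exact Finset.mem_biUnion.mpr ⟨Δ z, hΔ z (hIocIcc hz), hzF⟩
    have h1 : (Finset.Ioc b1 N).card ≤ ∑ c ∈ Finset.Icc 1 4, (F c).card :=
      le_trans (Finset.card_le_card hsub) (Finset.card_biUnion_le)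
    have h2 : ∑ c ∈ Finset.Icc 1 4, (F c).card
        = (F c2).card + ∑ c ∈ (Finset.Icc 1 4).erase c2, (F c).card :=
      (Finset.add_sum_erase _ _ hc2mem).symm
    have h3 : ∑ c ∈ (Finset.Icc 1 4).erase c2, (F c).card ≤ 3 * n := by
      calc ∑ c ∈ (Finset.Icc 1 4).erase c2, (F c).card ≤ ∑ _c ∈ (Finset.Icc 1 4).erase c2, n := by
            apply Finset.sum_le_sum
            intro c hc
            rw [← hdeadeq] at hc
            exact (Finset.mem_filter.mp hc).2
        _ = ((Finset.Icc 1 4).erase c2).card * n := by rw [Finset.sum_const, smul_eq_mul]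
        _ = 3 * n := by rw [Finset.card_erase_of_mem hc2mem, Nat.card_Icc]
    rw [Nat.card_Ioc] at h1
    omega
  have hKge : 2 * n + 2 ≤ K := by omega
  -- final construction
  have hFIoc : ∀ i : Fin K, b1 < ((F c2).orderEmbOfFin hK.symm) i ∧
      ((F c2).orderEmbOfFin hK.symm) i ≤ N ∧ Δ (((F c2).orderEmbOfFin hK.symm) i) = c2 := by
    intro i
    have := (F c2).orderEmbOfFin_mem hK.symm i
    simp only [hF, Finset.mem_filter, mem_Ioc] at this
    exact ⟨this.1.1, this.1.2, this.2⟩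
  exact final_step hm1 hn2 hN' hb1le ha1pos hab1 hgp key hKge hcount
    ((F c2).orderEmbOfFin hK.symm) hFIoc

/-- The block pattern 1,2,3,4,1,2,1,2,3,4. -/
def pat (k : ℕ) : ℕ :=
  if k = 0 ∨ k = 4 ∨ k = 6 then 1 else if k = 1 ∨ k = 5 ∨ k = 7 then 2
    else if k = 2 ∨ k = 8 then 3 else 4

/-- The extremal coloring with blocks of size n. -/
def lowC (n : ℕ) : ℕ → ℕ := fun z => pat ((z - 1) / n)

lemma pat_range (k : ℕ) : 1 ≤ pat k ∧ pat k ≤ 4 := by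
  unfold pat; split_ifs <;> omega

lemma block_spec (n z : ℕ) (hn : 1 ≤ n) (h1 : 1 ≤ z) (h2 : z ≤ 10 * n) :
    ∃ k, k ≤ 9 ∧ k * n + 1 ≤ z ∧ z ≤ k * n + n ∧ lowC n z = pat k := by
  have hd := Nat.div_add_mod (z - 1) n
  have hmod := Nat.mod_lt (z - 1) (show 0 < n by omega)
  have hcomm : ((z - 1) / n) * n = n * ((z - 1) / n) := Nat.mul_comm _ _
  refine ⟨(z - 1) / n, ?_, by omega, by omega, rfl⟩
  by_contra hcon
  have h10 : 10 ≤ (z - 1) / n := by omega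
  have := Nat.mul_le_mul_left n h10
  omega

lemma mono_gap {m : ℕ} {x : ℕ → ℕ} (hx : ∀ i j, 1 ≤ i → i < j → j ≤ m → x i < x j) :
    ∀ (d i j : ℕ), 1 ≤ i → i + d = j → j ≤ m → x i + d ≤ x j := by
  intro d
  induction d with
  | zero => intro i j _ h _; have : i = j := by omega
            subst this; omega
  | succ d ih =>
    intro i j hi h hj
    have h1 := ih i (i + d) hi rfl (by omega)
    have h2 := hx (i + d) j (by omega) (by omega) hj
    omega

lemma lower (m : ℕ) (hm : 3 ≤ m) :
    ¬ HasGoodPair m (lowC (m - 1)) (Finset.Icc 1 (10 * (m - 1))) := by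
  rintro ⟨x, y, hx, hy, hlt, hle⟩
  set n := m - 1 with hn
  have hn2 : 2 ≤ n := by omega
  have hm1 : m = n + 1 := by omega
  have hgapx := mono_gap hx.1
  have hgapy := mono_gap hy.1
  -- memberships
  have hmx1 := hx.2.1 1 le_rfl (by omega)
  have hmxm := hx.2.1 m (by omega) le_rfl
  have hmy1 := hy.2.1 1 le_rfl (by omega)
  have hmym := hy.2.1 m (by omega) le_rfl
  simp only [mem_Icc] at hmx1 hmxm hmy1 hmym
  -- gaps
  have hab : x 1 + n ≤ x m := hgapx n 1 m le_rfl (by omega) le_rfl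
  have hpq : y 1 + n ≤ y m := hgapy n 1 m le_rfl (by omega) le_rfl
  -- blocks of the four endpoints
  obtain ⟨ka, hka9, hka1, hka2, hka3⟩ := block_spec n (x 1) (by omega) (by omega) (by omega)
  obtain ⟨kb, hkb9, hkb1, hkb2, hkb3⟩ := block_spec n (x m) (by omega) (by omega) (by omega)
  obtain ⟨kp, hkp9, hkp1, hkp2, hkp3⟩ := block_spec n (y 1) (by omega) (by omega) (by omega)
  obtain ⟨kq, hkq9, hkq1, hkq2, hkq3⟩ := block_spec n (y m) (by omega) (by omega) (by omega)
  have hpatab : pat kb = pat ka := by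
    rw [← hka3, ← hkb3]; exact hx.2.2 m (by omega) le_rfl
  have hpatpq : pat kq = pat kp := by
    rw [← hkp3, ← hkq3]; exact hy.2.2 m (by omega) le_rfl
  -- Step A : x m ≥ 4n+1
  have hA : 4 * n + 1 ≤ x m := by
    by_contra hcon
    interval_cases ka <;> interval_cases kb <;>
      first
      | exact absurd hpatab (by decide)
      | omega
  -- Step B : y m ≤ 8n and y 1 ≤ 6n
  have hB : y m ≤ 8 * n ∧ y 1 ≤ 6 * n := by
    have hp42 : 4 * n + 2 ≤ y 1 := by omega
    interval_cases kp <;> interval_cases kq <;>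
      first
      | exact absurd hpatpq (by decide)
      | omega
  -- Step C
  have hb6 : x m ≤ 6 * n - 1 := by omega
  have hka01 : (kb = 4 ∧ ka = 0) ∨ (kb = 5 ∧ ka = 1) := by
    interval_cases ka <;> interval_cases kb <;>
      first
      | exact absurd hpatab (by decide)
      | omega
  -- the intermediate element
  set i0 := ka * n + n - x 1 + 2 with hi0d
  have hi0 : 2 ≤ i0 ∧ i0 ≤ m := by omega
  have hw1 : x 1 + (i0 - 1) ≤ x i0 := hgapx (i0 - 1) 1 i0 le_rfl (by omega) (by omega)
  have hw2 : x i0 + (m - i0) ≤ x m := hgapx (m - i0) i0 m (by omega) (by omega) le_rfl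
  have hmw := hx.2.1 i0 (by omega) (by omega)
  simp only [mem_Icc] at hmw
  obtain ⟨kw, hkw9, hkw1, hkw2, hkw3⟩ := block_spec n (x i0) (by omega) (by omega) (by omega)
  have hpataw : pat kw = pat ka := by
    rw [← hka3, ← hkw3]; exact hx.2.2 i0 (by omega) (by omega)
  -- conclude
  rcases hka01 with ⟨h4, h0⟩ | ⟨h5, h1⟩
  · subst h4; subst h0
    have hkw4 : kw = 4 := by
      interval_cases kw <;>
        first
        | exact absurd hpataw (by decide)
        | omega
    subst hkw4
    omega
  · subst h5; subst h1
    have hkw5 : kw = 5 := by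
      interval_cases kw <;>
        first
        | exact absurd hpataw (by decide)
        | omega
    subst hkw5
    omega


lemma gp_mono {m : ℕ} {Δ : ℕ → ℕ} {S S' : Finset ℕ} (hss : S ⊆ S')
    (h : HasGoodPair m Δ S) : HasGoodPair m Δ S' := by
  obtain ⟨x, y, hx, hy, h1, h2⟩ := h
  exact ⟨x, y, ⟨hx.1, fun i hi him => hss (hx.2.1 i hi him), hx.2.2⟩,
    ⟨hy.1, fun i hi him => hss (hy.2.1 i hi him), hy.2.2⟩, h1, h2⟩

theorem stmt14 (m : ℕ) (hm : 3 ≤ m) : g m 4 = 10 * m - 9 := by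
  have hmem : (10 * m - 9) ∈ {N | ∀ Δ : ℕ → ℕ,
      (∀ z ∈ Finset.Icc 1 N, Δ z ∈ Finset.Icc 1 4) →
      HasGoodPair m Δ (Finset.Icc 1 N)} := by
    intro Δ hΔ
    exact upper m (10 * m - 9) hm le_rfl Δ hΔ
  apply le_antisymm (Nat.sInf_le hmem)
  apply le_csInf ⟨_, hmem⟩
  intro N hN
  by_contra hcon
  push_neg at hcon
  have hrange : ∀ z ∈ Finset.Icc 1 N, lowC (m - 1) z ∈ Finset.Icc 1 4 := by
    intro z _
    have := pat_range ((z - 1) / (m - 1))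
    simp only [mem_Icc]
    exact this
  have hgp := hN (lowC (m - 1)) hrange
  have hsub : Finset.Icc 1 N ⊆ Finset.Icc 1 (10 * (m - 1)) := by
    intro z hz
    simp only [mem_Icc] at *
    omega
  exact lower m hm (gp_mono hsub hgp)
end
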